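/- Assume that the cost per stage g is bounded over X×U×W, that there exists a uniformly proper policy, that the state space X is finite, that J*(x) > 0 for all x ≠ t, and that X* = X̂, where X* = {x ∈ X : J*(x) < ∞}. Then Ĵ = J*. -/

import Mathlib

open scoped ENNReal
open Filter
open scoped Classical NNReal

/-- A stochastic shortest path (SSP) problem with state space `X`, control space `U`,
countable disturbance space `W`, a cost-free absorbing termination state `t`,
nonempty control constraint sets `Uc x ⊆ U`, disturbance distributions `P x u`,
system function `f`, and nonnegative (finite-valued) cost per stage `g`. -/
structure SSP (X U W : Type*) [Countable W] where
  t : X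
  Uc : X → Set U
  Uc_nonempty : ∀ x, (Uc x).Nonempty
  P : X → U → PMF W
  f : X → U → W → X
  g : X → U → W → ℝ≥0∞
  g_lt_top : ∀ x u w, g x u w < ⊤
  f_absorb : ∀ u ∈ Uc t, ∀ w, f t u w = t
  g_zero : ∀ u ∈ Uc t, ∀ w, g t u w = 0

namespace SSP

variable {X U W : Type*} [Countable W] (S : SSP X U W)

/-- A policy `π = (μ₀, μ₁, …)` is admissible if `μ_k(x) ∈ U(x)` for all `k, x`. -/
def IsPolicy (π : ℕ → X → U) : Prop := ∀ k x, π k x ∈ S.Uc x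

/-- Distribution of the state `x_k` after `k` steps under policy `π` starting from `x₀`. -/
noncomputable def stateDist (π : ℕ → X → U) (x₀ : X) : ℕ → PMF X
  | 0 => PMF.pure x₀
  | k + 1 => (stateDist π x₀ k).bind fun x => (S.P x (π k x)).map (S.f x (π k x))

/-- Expected value `E^π_{x₀}[J(x_k)]` of a nonnegative function along the trajectory. -/
noncomputable def expect (π : ℕ → X → U) (x₀ : X) (k : ℕ) (J : X → ℝ≥0∞) : ℝ≥0∞ :=
  ∑' x, S.stateDist π x₀ k x * J x

/-- Expected cost `E^π_{x₀}[g(x_k, μ_k(x_k), w_k)]` of the `k`-th stage. -/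
noncomputable def stageCost (π : ℕ → X → U) (x₀ : X) (k : ℕ) : ℝ≥0∞ :=
  S.expect π x₀ k fun x => ∑' w, S.P x (π k x) w * S.g x (π k x) w

/-- The cost `J_π(x₀) = Σ_{k≥0} E^π_{x₀}[g(x_k, μ_k(x_k), w_k)]` of a policy. -/
noncomputable def Jcost (π : ℕ → X → U) (x₀ : X) : ℝ≥0∞ :=
  ∑' k, S.stageCost π x₀ k

/-- `r_k(π, x₀)`: probability that `x_k ≠ t` under `π` starting from `x₀`. -/
noncomputable def r (π : ℕ → X → U) (x₀ : X) (k : ℕ) : ℝ≥0∞ :=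
  S.expect π x₀ k fun x => if x = S.t then 0 else 1

/-- `Σ_{k≥0} r_k(π,x₀)`: expected number of steps to reach the destination. -/
noncomputable def N (π : ℕ → X → U) (x₀ : X) : ℝ≥0∞ := ∑' k, S.r π x₀ k

/-- A policy is proper at `x` if it is admissible, `J_π(x) < ∞` and `Σ_k r_k(π,x) < ∞`. -/
def ProperAt (π : ℕ → X → U) (x : X) : Prop :=
  S.IsPolicy π ∧ S.Jcost π x < ⊤ ∧ S.N π x < ⊤

/-- The optimal cost function `J*`. -/
noncomputable def Jstar (x : X) : ℝ≥0∞ := ⨅ π ∈ {π | S.IsPolicy π}, S.Jcost π x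

/-- The restricted optimal cost function `Ĵ` over policies proper at `x`
(infimum over the empty set is `∞`). -/
noncomputable def Jhat (x : X) : ℝ≥0∞ := ⨅ π ∈ {π | S.ProperAt π x}, S.Jcost π x

/-- The effective domain `X̂ = {x | Ĵ(x) < ∞}` of `Ĵ`. -/
def Xhat : Set X := {x | S.Jhat x < ⊤}

/-- Expected `k`-th stage cost in the `δ`-perturbed problem (stage cost `g + δ` off `t`). -/
noncomputable def stageCostPert (δ : ℝ≥0∞) (π : ℕ → X → U) (x₀ : X) (k : ℕ) : ℝ≥0∞ :=
  S.expect π x₀ k fun x =>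
    ∑' w, S.P x (π k x) w * (S.g x (π k x) w + if x = S.t then 0 else δ)

/-- The cost `J_{π,δ}` of a policy in the `δ`-perturbed problem. -/
noncomputable def Jpert (δ : ℝ≥0∞) (π : ℕ → X → U) (x₀ : X) : ℝ≥0∞ :=
  ∑' k, S.stageCostPert δ π x₀ k

/-- The optimal cost function `Ĵ_δ` of the `δ`-perturbed problem. -/
noncomputable def JhatPert (δ : ℝ≥0∞) (x : X) : ℝ≥0∞ :=
  ⨅ π ∈ {π | S.IsPolicy π}, S.Jpert δ π x

/-- `Q J x u = E_{w∼P(·|x,u)}[g(x,u,w) + J(f(x,u,w))]`. -/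
noncomputable def Q (J : X → ℝ≥0∞) (x : X) (u : U) : ℝ≥0∞ :=
  ∑' w, S.P x u w * (S.g x u w + J (S.f x u w))

/-- The Bellman operator `(TJ)(x) = inf_{u ∈ U(x)} E[g(x,u,w) + J(f(x,u,w))]`. -/
noncomputable def bellman (J : X → ℝ≥0∞) (x : X) : ℝ≥0∞ := ⨅ u ∈ S.Uc x, S.Q J x u

/-- The tail policy `π_k = (μ_k, μ_{k+1}, …)`. -/
def tail (π : ℕ → X → U) (k : ℕ) : ℕ → X → U := fun m => π (k + m)

/-- The set `Ŵ` of functions `J` with `J(t) = 0`, `Ĵ ≤ J`, and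
`E^π_{x₀}[J(x_k)] → 0` for every pair `(π, x₀)` with `π` proper at `x₀`. -/
def What : Set (X → ℝ≥0∞) :=
  {J | J S.t = 0 ∧ S.Jhat ≤ J ∧
    ∀ π x₀, S.ProperAt π x₀ → Tendsto (fun k => S.expect π x₀ k J) atTop (nhds 0)}

/-- The set `B` of functions `J` with `J(t) = 0` that are bounded over `X̂`. -/
def Bset : Set (X → ℝ≥0∞) :=
  {J | J S.t = 0 ∧ (⨆ x ∈ S.Xhat, J x) < ⊤}

/-- A policy is uniformly proper if it is admissible and the expected number of steps
to reach the destination is uniformly bounded over `X̂`. -/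
def UniformlyProper (π : ℕ → X → U) : Prop :=
  S.IsPolicy π ∧ (⨆ x ∈ S.Xhat, S.N π x) < ⊤

/-- The cost per stage `g` is (uniformly) bounded over `X × U × W`. -/
def BoundedCost : Prop := ∃ b : ℝ≥0∞, b < ⊤ ∧ ∀ x u w, S.g x u w ≤ b

end SSP

/-!
Fix `x` and a policy `π` with `J_π(x) < ∞`. As `X` is finite, `J* ≥ a > 0` off `t`, so
`a · r_K(π, x) ≤ E[J*(x_K)] ≤ E[J_{π_K}(x_K)]`, the tail of the series for `J_π(x)`; hence
`r_K(π, x) → 0`. Every state reachable at time `K` has `J* < ∞`, i.e. lies in `X̂`, where the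
uniformly proper policy `π'` needs at most `C` expected steps and hence costs at most `b C`.
Following `π` for `K` stages and `π'` afterwards is therefore proper at `x` and costs at most
`J_π(x) + b C r_K(π, x) → J_π(x)`, so `Ĵ(x) ≤ J_π(x)`.
-/

theorem PMF.tsum_bind_mul {α β : Type*} (p : PMF α) (q : α → PMF β) (c : β → ℝ≥0∞) :
    ∑' z, p.bind q z * c z = ∑' y, p y * ∑' z, q y z * c z := by
  simp only [PMF.bind_apply, ← ENNReal.tsum_mul_right, ← ENNReal.tsum_mul_left, mul_assoc]
  exact ENNReal.tsum_comm

theorem ENNReal.exists_pos_forall_le_of_finite {α : Type*} [Finite α] {p : α → Prop}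
    {f : α → ℝ≥0∞} (hf : ∀ y, p y → 0 < f y) : ∃ a, 0 < a ∧ ∀ y, p y → a ≤ f y := by
  have hsmall : ∀ᶠ a in nhdsWithin 0 (Set.Ioi 0), ∀ y, p y → a ≤ f y :=
    nhdsWithin_le_nhds <| Filter.eventually_all.2 fun y =>
      if hy : p y then (eventually_lt_nhds (hf y hy)).mono fun _ ha _ => ha.le
      else Filter.Eventually.of_forall fun _ h => absurd h hy
  obtain ⟨a, ha, ha0⟩ := (hsmall.and self_mem_nhdsWithin).exists
  exact ⟨a, ha0, ha⟩

namespace SSP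

variable {X U W : Type*} [Countable W] (S : SSP X U W)

section Expectation

variable (π : ℕ → X → U) (x : X)

lemma stateDist_add (K m : ℕ) :
    S.stateDist π x (K + m) = (S.stateDist π x K).bind fun y => S.stateDist (tail π K) y m := by
  induction m with
  | zero => simp [stateDist, PMF.bind_pure]
  | succ m ih =>
      show (S.stateDist π x (K + m)).bind _ = _
      rw [ih, PMF.bind_bind]
      rfl

lemma expect_add (K m : ℕ) (c : X → ℝ≥0∞) :
    S.expect π x (K + m) c = S.expect π x K fun y => S.expect (tail π K) y m c := by
  rw [expect, stateDist_add, PMF.tsum_bind_mul]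
  rfl

lemma tsum_expect (K : ℕ) (c : ℕ → X → ℝ≥0∞) :
    ∑' m, S.expect π x K (c m) = S.expect π x K fun y => ∑' m, c m y := by
  simp only [expect, ← ENNReal.tsum_mul_left]
  exact ENNReal.tsum_comm

variable {π x} in
lemma expect_mono {K : ℕ} {c c' : X → ℝ≥0∞} (h : ∀ y, c y ≤ c' y) :
    S.expect π x K c ≤ S.expect π x K c' :=
  ENNReal.tsum_le_tsum fun y => mul_le_mul_right (h y) _

lemma expect_const_mul (K : ℕ) (a : ℝ≥0∞) (c : X → ℝ≥0∞) :
    S.expect π x K (fun y => a * c y) = a * S.expect π x K c := by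
  simp only [expect, ← ENNReal.tsum_mul_left, mul_left_comm]

lemma tsum_stageCost_add (K : ℕ) :
    ∑' m, S.stageCost π x (m + K) = S.expect π x K (S.Jcost (tail π K)) := by
  simp only [add_comm _ K, stageCost, expect_add]
  exact S.tsum_expect π x K _

lemma tsum_r_add (K : ℕ) : ∑' m, S.r π x (m + K) = S.expect π x K (S.N (tail π K)) := by
  simp only [add_comm _ K, r, expect_add]
  exact S.tsum_expect π x K _

lemma Jcost_eq_sum_add_expect (K : ℕ) :
    S.Jcost π x = ∑ k ∈ Finset.range K, S.stageCost π x k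
      + S.expect π x K (S.Jcost (tail π K)) := by
  rw [Jcost, ← ENNReal.summable.sum_add_tsum_nat_add' (k := K), tsum_stageCost_add]

lemma N_eq_sum_add_expect (K : ℕ) :
    S.N π x = ∑ k ∈ Finset.range K, S.r π x k + S.expect π x K (S.N (tail π K)) := by
  rw [N, ← ENNReal.summable.sum_add_tsum_nat_add' (k := K), tsum_r_add]

lemma tendsto_expect_Jcost_tail (hJ : S.Jcost π x ≠ ⊤) :
    Tendsto (fun K => S.expect π x K (S.Jcost (tail π K))) atTop (nhds 0) :=
  (ENNReal.tendsto_sum_nat_add _ hJ).congr (S.tsum_stageCost_add π x)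

lemma r_le_one (k : ℕ) : S.r π x k ≤ 1 :=
  calc S.r π x k ≤ S.expect π x k fun _ => 1 := S.expect_mono fun y => by split <;> simp
    _ = 1 := by simp [expect]

variable {π x} in
lemma expect_le_mul_r {K : ℕ} {c : X → ℝ≥0∞} {a : ℝ≥0∞} (hc : c S.t = 0)
    (h : ∀ y, S.stateDist π x K y ≠ 0 → y ≠ S.t → c y ≤ a) :
    S.expect π x K c ≤ a * S.r π x K := by
  rw [r, ← expect_const_mul]
  refine ENNReal.tsum_le_tsum fun y => ?_
  by_cases hy : S.stateDist π x K y = 0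
  · simp [hy]
  by_cases hyt : y = S.t
  · simp [hyt, hc]
  · simpa [hyt] using mul_le_mul_right (h y hy hyt) _

variable {π x} in
lemma mul_r_le_expect {K : ℕ} {c : X → ℝ≥0∞} {a : ℝ≥0∞} (h : ∀ y, y ≠ S.t → a ≤ c y) :
    a * S.r π x K ≤ S.expect π x K c := by
  rw [r, ← expect_const_mul]
  refine S.expect_mono fun y => ?_
  by_cases hyt : y = S.t
  · simp [hyt]
  · simpa [hyt] using h y hyt

variable {π x} in
lemma lt_top_of_expect_lt_top {K : ℕ} {c : X → ℝ≥0∞} (hc : S.expect π x K c < ⊤) {y : X}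
    (hy : S.stateDist π x K y ≠ 0) : c y < ⊤ := by
  have hle : S.stateDist π x K y * c y ≤ S.expect π x K c := ENNReal.le_tsum y
  refine lt_top_iff_ne_top.2 fun htop => ?_
  rw [htop, ENNReal.mul_top hy] at hle
  exact (hle.trans_lt hc).ne rfl

end Expectation

section Termination

variable {S} {π : ℕ → X → U} (hπ : S.IsPolicy π)
include hπ

lemma stateDist_t (k : ℕ) : S.stateDist π S.t k = PMF.pure S.t := by
  induction k with
  | zero => rfl
  | succ k ih =>
      have habsorb : S.f S.t (π k S.t) = Function.const W S.t := funext (S.f_absorb _ (hπ k S.t))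
      simp only [stateDist, ih, PMF.pure_bind, habsorb, PMF.map_const]

lemma expect_t (k : ℕ) (c : X → ℝ≥0∞) : S.expect π S.t k c = c S.t := by
  simp [expect, stateDist_t hπ, PMF.pure_apply]

lemma N_t : S.N π S.t = 0 := by
  simp [N, r, expect_t hπ]

lemma Jcost_le_mul_N {b : ℝ≥0∞} (hg : ∀ x u w, S.g x u w ≤ b) (x : X) :
    S.Jcost π x ≤ b * S.N π x := by
  rw [N, ← ENNReal.tsum_mul_left]
  refine ENNReal.tsum_le_tsum fun k => S.expect_le_mul_r (by simp [S.g_zero _ (hπ k S.t)])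
    fun y _ _ => ?_
  calc ∑' w, S.P y (π k y) w * S.g y (π k y) w ≤ ∑' w, S.P y (π k y) w * b :=
        ENNReal.tsum_le_tsum fun w => mul_le_mul_right (hg _ _ _) _
    _ = b := by rw [ENNReal.tsum_mul_right, PMF.tsum_coe, one_mul]

end Termination

lemma isPolicy_tail {π : ℕ → X → U} (hπ : S.IsPolicy π) (K : ℕ) : S.IsPolicy (tail π K) :=
  fun m x => hπ (K + m) x

lemma Jstar_le_Jcost {π : ℕ → X → U} (hπ : S.IsPolicy π) (x : X) : S.Jstar x ≤ S.Jcost π x :=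
  biInf_le _ hπ

lemma Jstar_le_Jhat : S.Jstar ≤ S.Jhat :=
  fun x => le_iInf₂ fun _ hπ => S.Jstar_le_Jcost hπ.1 x

section Switch

def switch (π π' : ℕ → X → U) (K : ℕ) : ℕ → X → U :=
  fun k => if k < K then π k else π' (k - K)

variable {S} {π π' : ℕ → X → U} {K : ℕ}

lemma isPolicy_switch (hπ : S.IsPolicy π) (hπ' : S.IsPolicy π') :
    S.IsPolicy (switch π π' K) := by
  intro k x
  unfold switch
  split
  · exact hπ k x
  · exact hπ' _ x

lemma tail_switch : tail (switch π π' K) K = π' := by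
  funext m
  simp [tail, switch]

lemma stateDist_switch (x : X) {k : ℕ} (hk : k ≤ K) :
    S.stateDist (switch π π' K) x k = S.stateDist π x k := by
  induction k with
  | zero => rfl
  | succ k ih =>
      have hswitch : switch π π' K k = π k := if_pos hk
      simp only [stateDist, ih (Nat.le_of_succ_le hk), hswitch]

lemma expect_switch (x : X) (c : X → ℝ≥0∞) :
    S.expect (switch π π' K) x K c = S.expect π x K c := by
  rw [expect, stateDist_switch x le_rfl, expect]

lemma Jcost_switch (x : X) :
    S.Jcost (switch π π' K) x = ∑ k ∈ Finset.range K, S.stageCost π x k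
      + S.expect π x K (S.Jcost π') := by
  rw [Jcost_eq_sum_add_expect _ _ _ K, tail_switch, expect_switch]
  congr 1
  refine Finset.sum_congr rfl fun k hk => ?_
  have hswitch : switch π π' K k = π k := if_pos (Finset.mem_range.1 hk)
  rw [stageCost, expect, stateDist_switch x (Finset.mem_range.1 hk).le, hswitch]
  rfl

lemma N_switch_lt_top (x : X) (hN : S.expect π x K (S.N π') ≠ ⊤) :
    S.N (switch π π' K) x < ⊤ := by
  rw [N_eq_sum_add_expect _ _ _ K, tail_switch, expect_switch]
  refine ENNReal.add_lt_top.2 ⟨?_, hN.lt_top⟩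
  calc ∑ k ∈ Finset.range K, S.r (switch π π' K) x k ≤ ∑ _k ∈ Finset.range K, (1 : ℝ≥0∞) :=
        Finset.sum_le_sum fun k _ => S.r_le_one _ x k
    _ < ⊤ := by simp

lemma Jhat_le_sum_add_expect (hπ : S.IsPolicy π) (hπ' : S.IsPolicy π') (x : X)
    (hJ : S.Jcost π x ≠ ⊤) (hJ' : S.expect π x K (S.Jcost π') ≠ ⊤)
    (hN' : S.expect π x K (S.N π') ≠ ⊤) :
    S.Jhat x ≤ ∑ k ∈ Finset.range K, S.stageCost π x k + S.expect π x K (S.Jcost π') := by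
  have hsum : ∑ k ∈ Finset.range K, S.stageCost π x k ≠ ⊤ :=
    ne_top_of_le_ne_top hJ (S.Jcost_eq_sum_add_expect π x K ▸ le_self_add)
  rw [← Jcost_switch]
  refine biInf_le _ ⟨isPolicy_switch hπ hπ', ?_, N_switch_lt_top x hN'⟩
  rw [Jcost_switch]
  exact ENNReal.add_lt_top.2 ⟨hsum.lt_top, hJ'.lt_top⟩

end Switch

variable {S} {π : ℕ → X → U}

lemma expect_Jstar_le_Jcost (hπ : S.IsPolicy π) (x : X) (K : ℕ) :
    S.expect π x K S.Jstar ≤ S.Jcost π x :=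
  calc S.expect π x K S.Jstar ≤ S.expect π x K (S.Jcost (tail π K)) :=
        S.expect_mono fun y => S.Jstar_le_Jcost (S.isPolicy_tail hπ K) y
    _ ≤ S.Jcost π x := S.Jcost_eq_sum_add_expect π x K ▸ le_add_self

lemma tendsto_r_of_le_Jstar (hπ : S.IsPolicy π) {x : X} (hJ : S.Jcost π x ≠ ⊤) {a : ℝ≥0∞}
    (ha : 0 < a) (hJstar : ∀ y, y ≠ S.t → a ≤ S.Jstar y) :
    Tendsto (S.r π x) atTop (nhds 0) := by
  set T := fun K => S.expect π x K (S.Jcost (tail π K))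
  have hT : Tendsto (fun K => T K / a) atTop (nhds 0) := by
    simpa using ENNReal.Tendsto.div_const (S.tendsto_expect_Jcost_tail π x hJ) (Or.inr ha.ne')
  refine tendsto_of_tendsto_of_tendsto_of_le_of_le tendsto_const_nhds hT (fun _ => zero_le)
    fun K => ?_
  have hTK : T K ≠ ⊤ := ne_top_of_le_ne_top hJ (S.Jcost_eq_sum_add_expect π x K ▸ le_add_self)
  rw [ENNReal.le_div_iff_mul_le (Or.inl ha.ne') (Or.inr hTK), mul_comm]
  calc a * S.r π x K ≤ S.expect π x K S.Jstar := S.mul_r_le_expect hJstar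
    _ ≤ T K := S.expect_mono fun y => S.Jstar_le_Jcost (S.isPolicy_tail hπ K) y

lemma Jhat_le_Jcost {b : ℝ≥0∞} (hg : ∀ x u w, S.g x u w ≤ b) (hb : b ≠ ⊤)
    {π' : ℕ → X → U} (hπ' : S.IsPolicy π') {C : ℝ≥0∞} (hC : C ≠ ⊤)
    (hN' : ∀ y, S.Jstar y < ⊤ → S.N π' y ≤ C) {a : ℝ≥0∞} (ha : 0 < a)
    (hJstar : ∀ y, y ≠ S.t → a ≤ S.Jstar y) (hπ : S.IsPolicy π) (x : X) :
    S.Jhat x ≤ S.Jcost π x := by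
  rcases eq_or_ne (S.Jcost π x) ⊤ with hJ | hJ
  · exact hJ ▸ le_top
  refine ENNReal.le_of_forall_pos_le_add fun ε hε _ => ?_
  have hr : Tendsto (fun K => b * C * S.r π x K) atTop (nhds 0) := by
    simpa using ENNReal.Tendsto.const_mul (tendsto_r_of_le_Jstar hπ hJ ha hJstar)
      (Or.inr (ENNReal.mul_ne_top hb hC))
  obtain ⟨K, hK⟩ := (hr.eventually_lt_const (ENNReal.coe_pos.2 hε)).exists
  have hreach : ∀ y, S.stateDist π x K y ≠ 0 → S.N π' y ≤ C := fun y hy =>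
    hN' y (S.lt_top_of_expect_lt_top ((expect_Jstar_le_Jcost hπ x K).trans_lt hJ.lt_top) hy)
  have hN : S.expect π x K (S.N π') ≤ C * S.r π x K :=
    S.expect_le_mul_r (N_t hπ') fun y hy _ => hreach y hy
  have hJ' : S.expect π x K (S.Jcost π') ≤ b * C * S.r π x K :=
    calc S.expect π x K (S.Jcost π') ≤ S.expect π x K fun y => b * S.N π' y :=
          S.expect_mono (Jcost_le_mul_N hπ' hg)
      _ ≤ b * (C * S.r π x K) := S.expect_const_mul π x K b _ ▸ by gcongr
      _ = b * C * S.r π x K := (mul_assoc _ _ _).symm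
  have hr_ne_top : S.r π x K ≠ ⊤ := ne_top_of_le_ne_top ENNReal.one_ne_top (S.r_le_one π x K)
  calc S.Jhat x
      ≤ ∑ k ∈ Finset.range K, S.stageCost π x k + S.expect π x K (S.Jcost π') :=
        Jhat_le_sum_add_expect hπ hπ' x hJ ((hJ'.trans_lt (hK.trans ENNReal.coe_lt_top)).ne)
          (ne_top_of_le_ne_top (ENNReal.mul_ne_top hC hr_ne_top) hN)
    _ ≤ S.Jcost π x + ε :=
        add_le_add (S.Jcost_eq_sum_add_expect π x K ▸ le_self_add) (hJ'.trans hK.le)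

end SSP

/-- If `g` is bounded, a uniformly proper policy exists, `X` is finite,
`J*(x) > 0` for all `x ≠ t`, and `X* = X̂` where `X* = {x | J*(x) < ∞}`, then `Ĵ = J*`. -/
theorem Jhat_eq_Jstar_of_finite {X U W : Type*} [Countable W] (S : SSP X U W) [Finite X]
    (hb : S.BoundedCost) (hup : ∃ π : ℕ → X → U, S.UniformlyProper π)
    (hpos : ∀ x, x ≠ S.t → 0 < S.Jstar x)
    (hdom : {x | S.Jstar x < ⊤} = S.Xhat) :
    S.Jhat = S.Jstar := by
  obtain ⟨b, hb_top, hg⟩ := hb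
  obtain ⟨π', hπ', hC⟩ := hup
  obtain ⟨a, ha, hJstar⟩ := ENNReal.exists_pos_forall_le_of_finite hpos
  have hN' : ∀ y, S.Jstar y < ⊤ → S.N π' y ≤ ⨆ x ∈ S.Xhat, S.N π' x := fun y hy =>
    le_iSup₂ (f := fun x _ => S.N π' x) y (hdom ▸ hy)
  refine le_antisymm (fun x => le_iInf₂ fun π hπ => ?_) S.Jstar_le_Jhat
  exact S.Jhat_le_Jcost hg hb_top.ne hπ' hC.ne hN' ha hJstar hπ x
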